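/- arXiv:0809.1404 — 4 statements merged into one kernel-verified Lean document; each statement's English description precedes it below -/
import Mathlib

section
/- Generalized Farkas Lemma: Let X be a compact Hausdorff space, Y a real Hilbert space, and A : Y → C(X) a bounded linear map with adjoint A' : C(X)* → Y defined by ⟨λ, Ay⟩ = ⟨A'λ, y⟩. Then exactly one of the following holds: (1) there exists a nonzero positive functional t ∈ C(X)* with A't = 0; (2) there exists y ∈ Y such that (Ay)(x) > 0 for all x ∈ X. -/
/-!
If some `A y` is strictly positive, it is bounded below by some `ε > 0` on the compact space `X`,
so a positive `t` with `t ∘ A = 0` satisfies `0 = t (A y) ≥ ε t 1`; but `|t f| ≤ ‖f‖ t 1` for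
positive `t`, so `t 1 > 0` unless `t = 0`. Conversely, if no `A y` is strictly positive, the range
of `A` is a subspace disjoint from the open convex cone of strictly positive functions, and
Hahn–Banach separation yields a functional vanishing on the range and negative on the cone; its
negative is positive and nonzero.
-/

open Set

theorem LinearMap.apply_eq_zero_of_forall_mem_le {E : Type*} [AddCommGroup E] [Module ℝ E]
    {S : Submodule ℝ E} (φ : E →ₗ[ℝ] ℝ) {u : ℝ} (hφ : ∀ f ∈ S, u ≤ φ f) {f : E} (hf : f ∈ S) :
    φ f = 0 := by
  by_contra hne
  have := hφ (((u - 1) / φ f) • f) (S.smul_mem _ hf)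
  rw [map_smul, smul_eq_mul, div_mul_cancel₀ _ hne] at this
  linarith

namespace ContinuousMap

variable {X : Type*} [TopologicalSpace X] {t : C(X, ℝ) →L[ℝ] ℝ}

theorem convex_setOf_forall_pos : Convex ℝ {f : C(X, ℝ) | ∀ x, 0 < f x} := by
  simp only [ofPred_forall]
  exact convex_iInter fun x => convex_halfSpace_gt (evalCLM ℝ x).isLinear 0

theorem apply_le_apply_of_forall_le (ht : ∀ f : C(X, ℝ), (∀ x, 0 ≤ f x) → 0 ≤ t f)
    {f g : C(X, ℝ)} (h : ∀ x, f x ≤ g x) : t f ≤ t g := by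
  simpa using ht (g - f) fun x => by simpa using h x

theorem apply_nonneg_of_forall_pos_imp_pos (ht : ∀ f : C(X, ℝ), (∀ x, 0 < f x) → 0 < t f)
    {f : C(X, ℝ)} (hf : ∀ x, 0 ≤ f x) : 0 ≤ t f := by
  by_contra! hneg
  have h1 : 0 < t 1 := ht 1 fun _ => zero_lt_one
  set c := -t f / t 1
  have hc : 0 < c := div_pos (neg_pos.2 hneg) h1
  -- `f + c • 1` is strictly positive, yet `c` is chosen so that `t` kills it
  have := ht (f + c • 1) fun x => by simpa using add_pos_of_nonneg_of_pos (hf x) hc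
  rw [map_add, map_smul, smul_eq_mul, div_mul_cancel₀ _ h1.ne'] at this
  simp at this

variable [CompactSpace X]

theorem isOpen_setOf_forall_pos : IsOpen {f : C(X, ℝ) | ∀ x, 0 < f x} := by
  simpa [MapsTo] using isOpen_setOfPred_mapsTo (X := X) isCompact_univ (isOpen_Ioi (a := (0 : ℝ)))

theorem exists_pos_le_of_forall_pos {f : C(X, ℝ)} (hf : ∀ x, 0 < f x) :
    ∃ ε, 0 < ε ∧ ∀ x, ε ≤ f x := by
  simpa using isCompact_univ.exists_forall_le' f.continuous.continuousOn fun x _ => hf x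

theorem abs_apply_le_norm_mul_apply_one (ht : ∀ f : C(X, ℝ), (∀ x, 0 ≤ f x) → 0 ≤ t f)
    (f : C(X, ℝ)) : |t f| ≤ ‖f‖ * t 1 := by
  have hle : ∀ x, |f x| ≤ ‖f‖ := f.norm_coe_le_norm
  rw [abs_le]
  constructor
  · simpa using apply_le_apply_of_forall_le ht (f := -‖f‖ • 1) (g := f) fun x => by
      simpa using neg_le_of_abs_le (hle x)
  · simpa using apply_le_apply_of_forall_le ht (f := f) (g := ‖f‖ • 1) fun x => by
      simpa using le_of_abs_le (hle x)

theorem apply_one_pos_of_ne_zero (ht : ∀ f : C(X, ℝ), (∀ x, 0 ≤ f x) → 0 ≤ t f)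
    (h0 : t ≠ 0) : 0 < t 1 := by
  refine (ht 1 fun _ => zero_le_one).lt_of_ne fun h1 => h0 ?_
  ext f
  simpa [← h1] using abs_apply_le_norm_mul_apply_one ht f

theorem apply_pos_of_forall_pos (ht : ∀ f : C(X, ℝ), (∀ x, 0 ≤ f x) → 0 ≤ t f) (h0 : t ≠ 0)
    {f : C(X, ℝ)} (hf : ∀ x, 0 < f x) : 0 < t f := by
  obtain ⟨ε, hε, hεf⟩ := exists_pos_le_of_forall_pos hf
  calc 0 < ε * t 1 := mul_pos hε (apply_one_pos_of_ne_zero ht h0)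
    _ ≤ t f := by
      simpa using apply_le_apply_of_forall_le ht (f := ε • 1) (g := f) (by simpa using hεf)

theorem exists_positive_functional_annihilating_of_forall_not_pos {S : Submodule ℝ C(X, ℝ)}
    (hS : ∀ f ∈ S, ¬ ∀ x, 0 < f x) :
    ∃ t : C(X, ℝ) →L[ℝ] ℝ, t ≠ 0 ∧ (∀ f : C(X, ℝ), (∀ x, 0 ≤ f x) → 0 ≤ t f) ∧
      ∀ f ∈ S, t f = 0 := by
  obtain ⟨φ, u, hφP, hφS⟩ := geometric_hahn_banach_open convex_setOf_forall_pos
    isOpen_setOf_forall_pos S.convex (disjoint_left.2 fun f hfP hfS => hS f hfS hfP)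
  have hφS0 : ∀ f ∈ S, φ f = 0 := fun f hf =>
    (φ : C(X, ℝ) →ₗ[ℝ] ℝ).apply_eq_zero_of_forall_mem_le hφS hf
  have hpos : ∀ f : C(X, ℝ), (∀ x, 0 < f x) → 0 < (-φ) f := fun f hf => by
    linarith [hφP f hf, hφS 0 S.zero_mem, hφS0 0 S.zero_mem, _root_.neg_apply φ f]
  refine ⟨-φ, fun h => by simpa [h] using hpos 1 fun _ => zero_lt_one,
    fun f hf => apply_nonneg_of_forall_pos_imp_pos hpos hf, fun f hf => by simp [hφS0 f hf]⟩

end ContinuousMap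

theorem stmt_4_general {X : Type*} [TopologicalSpace X] [CompactSpace X]
    {Y : Type*} [NormedAddCommGroup Y] [InnerProductSpace ℝ Y] [CompleteSpace Y]
    (A : Y →L[ℝ] C(X, ℝ)) :
    Xor'
      (∃ t : C(X, ℝ) →L[ℝ] ℝ, t ≠ 0 ∧ (∀ f : C(X, ℝ), (∀ x, 0 ≤ f x) → 0 ≤ t f) ∧
        (InnerProductSpace.toDual ℝ Y).symm (t.comp A) = 0)
      (∃ y : Y, ∀ x : X, 0 < A y x) := by
  have hA : ∀ t : C(X, ℝ) →L[ℝ] ℝ, (InnerProductSpace.toDual ℝ Y).symm (t.comp A) = 0 ↔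
      ∀ f ∈ LinearMap.range (A : Y →ₗ[ℝ] C(X, ℝ)), t f = 0 := by
    intro t
    simp [ContinuousLinearMap.ext_iff]
  simp_rw [hA]
  refine xor_iff_iff_not.2 ⟨?_, ?_⟩
  · rintro ⟨t, ht0, htpos, htA⟩ ⟨y, hy⟩
    exact (ContinuousMap.apply_pos_of_forall_pos htpos ht0 hy).ne' (htA _ ⟨y, rfl⟩)
  · intro h
    refine ContinuousMap.exists_positive_functional_annihilating_of_forall_not_pos ?_
    rintro _ ⟨y, rfl⟩ hy
    exact h ⟨y, hy⟩

/-- Generalized Farkas Lemma: for `X` compact Hausdorff, `Y` a real Hilbert space, and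
`A : Y → C(X)` bounded linear with adjoint `A' : C(X)* → Y` (via Riesz representation,
`⟨λ, Ay⟩ = ⟨A'λ, y⟩`), exactly one of the following holds:
(1) there is a nonzero positive `t ∈ C(X)*` with `A't = 0`;
(2) there is `y ∈ Y` with `(Ay)(x) > 0` for all `x`. -/
theorem stmt_4 {X : Type*} [TopologicalSpace X] [CompactSpace X] [T2Space X]
    {Y : Type*} [NormedAddCommGroup Y] [InnerProductSpace ℝ Y] [CompleteSpace Y]
    (A : Y →L[ℝ] C(X, ℝ)) :
    Xor'
      (∃ t : C(X, ℝ) →L[ℝ] ℝ, t ≠ 0 ∧ (∀ f : C(X, ℝ), (∀ x, 0 ≤ f x) → 0 ≤ t f) ∧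
        (InnerProductSpace.toDual ℝ Y).symm (t.comp A) = 0)
      (∃ y : Y, ∀ x : X, 0 < A y x) :=
  stmt_4_general A
end

section
/- In the setting of the generalized Farkas lemma, if there is no nonzero positive t ∈ C(X)* with A't = 0, then there exists ε > 0 such that ‖A't‖ ≥ ε‖t‖ for all positive t ∈ C(X)*. -/
/-!
Normalise a positive functional `t` by `t 1`, which is its norm. The normalised positive
functionals form a weak-* closed subset of the unit ball of `C(X)*`, hence a weak-* compact set
by Banach–Alaoglu. On it `s ↦ ‖A's‖` is weak-* lower semicontinuous (its sublevel set at `c`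
is cut out by the weak-* closed conditions `|s (A y)| ≤ c‖y‖`), so it attains its minimum, which
is positive since `A'` has no nonzero positive zero.
-/

open ContinuousLinearMap

theorem IsCompact.exists_pos_forall_le_of_lowerSemicontinuousOn {α : Type*}
    [TopologicalSpace α] {K : Set α} {g : α → ℝ} (hK : IsCompact K)
    (hg : LowerSemicontinuousOn g K) (hpos : ∀ x ∈ K, 0 < g x) :
    ∃ ε > 0, ∀ x ∈ K, ε ≤ g x := by
  rcases K.eq_empty_or_nonempty with rfl | hne
  · exact ⟨1, one_pos, by simp⟩
  · obtain ⟨a, ha, hmin⟩ := hg.exists_isMinOn hne hK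
    exact ⟨g a, hpos a ha, fun x hx => hmin hx⟩

theorem WeakDual.lowerSemicontinuous_norm_comp {𝕜 E F : Type*} [NontriviallyNormedField 𝕜]
    [SeminormedAddCommGroup E] [NormedSpace 𝕜 E] [SeminormedAddCommGroup F] [NormedSpace 𝕜 F]
    (B : F →L[𝕜] E) :
    LowerSemicontinuous fun s : WeakDual 𝕜 E => ‖(WeakDual.toStrongDual s).comp B‖ := by
  refine lowerSemicontinuous_iff_isClosed_preimage.2 fun c => ?_
  by_cases hc : 0 ≤ c
  · have hsub : (fun s : WeakDual 𝕜 E => ‖(WeakDual.toStrongDual s).comp B‖) ⁻¹' Set.Iic c =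
        ⋂ y : F, {s | ‖s (B y)‖ ≤ c * ‖y‖} := by
      ext s
      simp only [Set.mem_preimage, Set.mem_Iic, Set.mem_iInter, Set.mem_ofPred_eq,
        opNorm_le_iff hc]
      rfl
    rw [hsub]
    exact isClosed_iInter fun y =>
      isClosed_le (WeakDual.eval_continuous (B y)).norm continuous_const
  · convert isClosed_empty
    ext s
    simp only [Set.mem_preimage, Set.mem_Iic, Set.mem_empty_iff_false, iff_false, not_le]
    exact (not_le.1 hc).trans_le (norm_nonneg _)

section PositiveFunctional

variable {X : Type*} [TopologicalSpace X]

variable (X) in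
def stateSpace : Set (WeakDual ℝ C(X, ℝ)) :=
  {s | (∀ f : C(X, ℝ), (∀ x, 0 ≤ f x) → 0 ≤ s f) ∧ s 1 = 1}

theorem isClosed_stateSpace : IsClosed (stateSpace X) := by
  have hpos : IsClosed {s : WeakDual ℝ C(X, ℝ) | ∀ f : C(X, ℝ), (∀ x, 0 ≤ f x) → 0 ≤ s f} := by
    simp only [Set.ofPred_forall]
    exact isClosed_iInter fun f => isClosed_iInter fun _ =>
      isClosed_le continuous_const (WeakDual.eval_continuous f)
  exact hpos.inter (isClosed_eq (WeakDual.eval_continuous 1) continuous_const)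

variable [CompactSpace X]

theorem abs_apply_le_apply_one_mul_norm_of_nonneg (t : C(X, ℝ) →L[ℝ] ℝ)
    (ht : ∀ f : C(X, ℝ), (∀ x, 0 ≤ f x) → 0 ≤ t f) (f : C(X, ℝ)) :
    |t f| ≤ t 1 * ‖f‖ := by
  have hbound : ∀ x, |f x| ≤ ‖f‖ := fun x => f.norm_coe_le_norm x
  have hle : 0 ≤ t (‖f‖ • 1 - f) := ht _ fun x => by
    simpa using (le_abs_self (f x)).trans (hbound x)
  have hge : 0 ≤ t (‖f‖ • 1 + f) := ht _ fun x => by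
    simpa [neg_le_iff_add_nonneg'] using (neg_abs_le (f x)).trans' (neg_le_neg (hbound x))
  rw [map_sub, map_smul, smul_eq_mul] at hle
  rw [map_add, map_smul, smul_eq_mul] at hge
  rw [abs_le]
  constructor <;> linarith [mul_comm (t 1) ‖f‖]

theorem norm_eq_apply_one_of_nonneg (t : C(X, ℝ) →L[ℝ] ℝ)
    (ht : ∀ f : C(X, ℝ), (∀ x, 0 ≤ f x) → 0 ≤ t f) :
    ‖t‖ = t 1 := by
  refine le_antisymm (t.opNorm_le_bound (ht 1 fun _ => zero_le_one) fun f =>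
    abs_apply_le_apply_one_mul_norm_of_nonneg t ht f) ?_
  have hone : ‖(1 : C(X, ℝ))‖ ≤ 1 := (ContinuousMap.norm_le _ zero_le_one).2 fun _ => by simp
  calc t 1 ≤ ‖t 1‖ := le_abs_self _
    _ ≤ ‖t‖ * ‖(1 : C(X, ℝ))‖ := t.le_opNorm 1
    _ ≤ ‖t‖ := mul_le_of_le_one_right (norm_nonneg t) hone

theorem stateSpace_subset_closedBall :
    stateSpace X ⊆ WeakDual.toStrongDual ⁻¹' Metric.closedBall 0 1 := fun s hs =>
  ((dist_zero_right (WeakDual.toStrongDual s)).trans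
    ((norm_eq_apply_one_of_nonneg _ hs.1).trans hs.2)).le

theorem isCompact_stateSpace : IsCompact (stateSpace X) :=
  (WeakDual.isCompact_closedBall (0 : StrongDual ℝ C(X, ℝ)) 1).of_isClosed_subset
    isClosed_stateSpace stateSpace_subset_closedBall

theorem inv_norm_smul_mem_stateSpace {t : C(X, ℝ) →L[ℝ] ℝ}
    (ht : ∀ f : C(X, ℝ), (∀ x, 0 ≤ f x) → 0 ≤ t f) (h0 : ‖t‖ ≠ 0) :
    StrongDual.toWeakDual (‖t‖⁻¹ • t) ∈ stateSpace X := by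
  refine ⟨fun f hf => mul_nonneg (inv_nonneg.2 (norm_nonneg t)) (ht f hf), ?_⟩
  change ‖t‖⁻¹ * t 1 = 1
  rw [← norm_eq_apply_one_of_nonneg t ht, inv_mul_cancel₀ h0]

end PositiveFunctional

theorem stmt_5_general {X : Type*} [TopologicalSpace X] [CompactSpace X]
    {Y : Type*} [NormedAddCommGroup Y] [InnerProductSpace ℝ Y] [CompleteSpace Y]
    (A : Y →L[ℝ] C(X, ℝ))
    (h : ¬ ∃ t : C(X, ℝ) →L[ℝ] ℝ, t ≠ 0 ∧ (∀ f : C(X, ℝ), (∀ x, 0 ≤ f x) → 0 ≤ t f) ∧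
      (InnerProductSpace.toDual ℝ Y).symm (t.comp A) = 0) :
    ∃ ε > 0, ∀ t : C(X, ℝ) →L[ℝ] ℝ, (∀ f : C(X, ℝ), (∀ x, 0 ≤ f x) → 0 ≤ t f) →
      ε * ‖t‖ ≤ ‖(InnerProductSpace.toDual ℝ Y).symm (t.comp A)‖ := by
  have hpos : ∀ s ∈ stateSpace X, 0 < ‖(WeakDual.toStrongDual s).comp A‖ := by
    refine fun s hs => norm_pos_iff.2 fun hzero => h ⟨WeakDual.toStrongDual s, ?_, hs.1, ?_⟩
    · exact fun hs0 => one_ne_zero (hs.2.symm.trans (DFunLike.congr_fun hs0 1))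
    · rw [hzero, map_zero]
  obtain ⟨ε, hε, hmin⟩ := isCompact_stateSpace.exists_pos_forall_le_of_lowerSemicontinuousOn
    ((WeakDual.lowerSemicontinuous_norm_comp A).lowerSemicontinuousOn _) hpos
  refine ⟨ε, hε, fun t ht => ?_⟩
  rw [LinearIsometryEquiv.norm_map]
  rcases (norm_nonneg t).eq_or_lt with h0 | htpos
  · rw [← h0, mul_zero]
    exact norm_nonneg _
  · have hε_le := hmin _ (inv_norm_smul_mem_stateSpace ht htpos.ne')
    rw [← le_inv_mul_iff₀' htpos]
    simpa [smul_comp, norm_smul, abs_of_nonneg (norm_nonneg t)] using hε_le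

/-- If there is no nonzero positive `t ∈ C(X)*` with `A't = 0` (adjoint via Riesz
representation), then there exists `ε > 0` with `‖A't‖ ≥ ε‖t‖` for all positive
`t ∈ C(X)*`. -/
theorem stmt_5 {X : Type*} [TopologicalSpace X] [CompactSpace X] [T2Space X]
    {Y : Type*} [NormedAddCommGroup Y] [InnerProductSpace ℝ Y] [CompleteSpace Y]
    (A : Y →L[ℝ] C(X, ℝ))
    (h : ¬ ∃ t : C(X, ℝ) →L[ℝ] ℝ, t ≠ 0 ∧ (∀ f : C(X, ℝ), (∀ x, 0 ≤ f x) → 0 ≤ t f) ∧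
      (InnerProductSpace.toDual ℝ Y).symm (t.comp A) = 0) :
    ∃ ε > 0, ∀ t : C(X, ℝ) →L[ℝ] ℝ, (∀ f : C(X, ℝ), (∀ x, 0 ≤ f x) → 0 ≤ t f) →
      ε * ‖t‖ ≤ ‖(InnerProductSpace.toDual ℝ Y).symm (t.comp A)‖ :=
  stmt_5_general A h
end

section
/- Let X be compact Hausdorff, Y a real Hilbert space, A : Y → C(X) bounded linear with adjoint A', and T the cone of positive functionals in C(X)*. Suppose w := inf{‖A't‖ : t ∈ T, ‖t‖ = 1} > 0 and that the infimum is attained at t_∞ ∈ T with ‖t_∞‖ = 1. Then setting y = A't_∞ / ‖A't_∞‖, one has ⟨A't, y⟩ ≥ w for all t ∈ T with ‖t‖ = 1, hence (Ay)(x) ≥ w for all x ∈ X. -/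
/-!
A positive functional on `C(X, ℝ)` has norm `t 1`, so the unit vectors of the positive cone
(the states) form a convex set, and so does its image `K` under `A'`. By hypothesis `A' t_∞` is the
point of minimal norm of `K`, and the variational inequality for that point in a Hilbert space
reads `⟪A' t, A' t_∞⟫ ≥ ‖A' t_∞‖² = w²` on `K`. Evaluation at `x` is a state, with
`⟪A' δₓ, y⟫ = (A y) x`.
-/

open InnerProductSpace

def ContinuousMap.states (X : Type*) [TopologicalSpace X] [CompactSpace X] :
    Set (C(X, ℝ) →L[ℝ] ℝ) :=
  {t | (∀ f : C(X, ℝ), (∀ x, 0 ≤ f x) → 0 ≤ t f) ∧ ‖t‖ = 1}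

namespace ContinuousMap

variable {X : Type*} [TopologicalSpace X] [CompactSpace X]

theorem norm_eq_apply_one_of_nonneg {t : C(X, ℝ) →L[ℝ] ℝ}
    (ht : ∀ f : C(X, ℝ), (∀ x, 0 ≤ f x) → 0 ≤ t f) : ‖t‖ = t 1 := by
  have norm_one_le : ‖(1 : C(X, ℝ))‖ ≤ 1 := (norm_le _ zero_le_one).2 fun _ => by simp
  -- `‖f‖ • 1 ± f ≥ 0` bounds `|t f|` by `t 1 * ‖f‖`.
  have bound : ∀ f : C(X, ℝ), ‖t f‖ ≤ t 1 * ‖f‖ := by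
    intro f
    have h₁ := ht (‖f‖ • 1 - f) fun x => by simpa using f.apply_le_norm x
    have h₂ := ht (‖f‖ • 1 + f) fun x => by
      simpa [neg_le_iff_add_nonneg'] using f.neg_norm_le_apply x
    simp only [map_sub, map_add, map_smul, smul_eq_mul] at h₁ h₂
    exact abs_le.2 ⟨by linarith, by linarith⟩
  refine le_antisymm (t.opNorm_le_bound (ht 1 fun _ => zero_le_one) bound) ?_
  calc t 1 ≤ ‖t 1‖ := le_abs_self _
    _ ≤ ‖t‖ * ‖(1 : C(X, ℝ))‖ := t.le_opNorm 1
    _ ≤ ‖t‖ := mul_le_of_le_one_right (norm_nonneg t) norm_one_le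

theorem convex_states : Convex ℝ (states X) := by
  rintro s ⟨hs, hs1⟩ t ⟨ht, ht1⟩ a b ha hb hab
  have hpos : ∀ f : C(X, ℝ), (∀ x, 0 ≤ f x) → 0 ≤ (a • s + b • t) f := fun f hf => by
    simpa using add_nonneg (mul_nonneg ha (hs f hf)) (mul_nonneg hb (ht f hf))
  refine ⟨hpos, ?_⟩
  rw [norm_eq_apply_one_of_nonneg hpos]
  rw [norm_eq_apply_one_of_nonneg hs] at hs1
  rw [norm_eq_apply_one_of_nonneg ht] at ht1
  simp [hs1, ht1, hab]

theorem evalCLM_mem_states (x : X) : evalCLM ℝ x ∈ states X := by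
  have hpos : ∀ f : C(X, ℝ), (∀ x, 0 ≤ f x) → 0 ≤ evalCLM ℝ x f := fun f hf => hf x
  exact ⟨hpos, by simp [norm_eq_apply_one_of_nonneg hpos]⟩

end ContinuousMap

theorem norm_le_inner_of_isMinOn_norm {F : Type*} [NormedAddCommGroup F] [InnerProductSpace ℝ F]
    {K : Set F} (hK : Convex ℝ K) {v : F} (hv : v ∈ K) (hmin : IsMinOn (‖·‖) K v)
    {u : F} (hu : u ∈ K) : ‖v‖ ≤ ⟪u, ‖v‖⁻¹ • v⟫_ℝ := by
  have : Nonempty K := ⟨⟨v, hv⟩⟩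
  have hinf : ‖(0 : F) - v‖ = ⨅ w : K, ‖(0 : F) - w‖ := by
    refine le_antisymm (le_ciInf fun w => ?_)
      (ciInf_le (f := fun w : K => ‖(0 : F) - w‖) ⟨0, ?_⟩ ⟨v, hv⟩)
    · simpa using hmin w.2
    · rintro _ ⟨w, rfl⟩; exact norm_nonneg _
  have hsq : ‖v‖ ^ 2 ≤ ⟪u, v⟫_ℝ := by
    have := (norm_eq_iInf_iff_real_inner_le_zero hK hv).1 hinf u hu
    rw [zero_sub, inner_neg_left, inner_sub_right, real_inner_self_eq_norm_sq,
      real_inner_comm] at this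
    linarith
  rcases (norm_nonneg v).eq_or_lt with hv0 | hv0
  · simp [← hv0]
  · rw [real_inner_smul_right]
    calc ‖v‖ = ‖v‖⁻¹ * ‖v‖ ^ 2 := by field_simp
      _ ≤ ‖v‖⁻¹ * ⟪u, v⟫_ℝ := by gcongr

theorem stmt_6_general {X : Type*} [TopologicalSpace X] [CompactSpace X]
    {Y : Type*} [NormedAddCommGroup Y] [InnerProductSpace ℝ Y] [CompleteSpace Y]
    (A : Y →L[ℝ] C(X, ℝ)) (w : ℝ)
    (A' : (C(X, ℝ) →L[ℝ] ℝ) → Y)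
    (hA' : ∀ t, A' t = (InnerProductSpace.toDual ℝ Y).symm (t.comp A))
    (hinf : ∀ t : C(X, ℝ) →L[ℝ] ℝ,
      (∀ f : C(X, ℝ), (∀ x, 0 ≤ f x) → 0 ≤ t f) → ‖t‖ = 1 → w ≤ ‖A' t‖)
    (tInf : C(X, ℝ) →L[ℝ] ℝ)
    (htInfpos : ∀ f : C(X, ℝ), (∀ x, 0 ≤ f x) → 0 ≤ tInf f)
    (htInfnorm : ‖tInf‖ = 1) (hatt : ‖A' tInf‖ = w) :
    (∀ t : C(X, ℝ) →L[ℝ] ℝ, (∀ f : C(X, ℝ), (∀ x, 0 ≤ f x) → 0 ≤ t f) → ‖t‖ = 1 →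
      w ≤ inner ℝ (A' t) (‖A' tInf‖⁻¹ • A' tInf)) ∧
    (∀ x : X, w ≤ A (‖A' tInf‖⁻¹ • A' tInf) x) := by
  have hconvex : Convex ℝ (A' '' ContinuousMap.states X) := by
    rintro _ ⟨s, hs, rfl⟩ _ ⟨t, ht, rfl⟩ a b ha hb hab
    refine ⟨a • s + b • t, ContinuousMap.convex_states hs ht ha hb hab, ?_⟩
    simp [hA', ContinuousLinearMap.add_comp, ContinuousLinearMap.smul_comp]
  have hmin : IsMinOn (‖·‖) (A' '' ContinuousMap.states X) (A' tInf) := by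
    rintro _ ⟨t, ht, rfl⟩
    change ‖A' tInf‖ ≤ ‖A' t‖
    exact hatt ▸ hinf t ht.1 ht.2
  have hstates : ∀ t ∈ ContinuousMap.states X, w ≤ ⟪A' t, ‖A' tInf‖⁻¹ • A' tInf⟫_ℝ :=
    fun t ht => hatt ▸ norm_le_inner_of_isMinOn_norm hconvex
      ⟨tInf, ⟨htInfpos, htInfnorm⟩, rfl⟩ hmin ⟨t, ht, rfl⟩
  refine ⟨fun t ht ht1 => hstates t ⟨ht, ht1⟩, fun x => ?_⟩
  have := hstates _ (ContinuousMap.evalCLM_mem_states x)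
  rwa [hA', toDual_symm_apply] at this

/-- In the setting of the generalized Farkas lemma, if `w = inf {‖A't‖ : t ∈ T, ‖t‖ = 1}`
is positive and attained at a unit `t_∞` in the positive cone `T ⊆ C(X)*`, then for
`y = A't_∞ / ‖A't_∞‖` one has `⟨A't, y⟩ ≥ w` for all unit `t ∈ T`, and hence
`(Ay)(x) ≥ w` for all `x ∈ X`. -/
theorem stmt_6 {X : Type*} [TopologicalSpace X] [CompactSpace X] [T2Space X]
    {Y : Type*} [NormedAddCommGroup Y] [InnerProductSpace ℝ Y] [CompleteSpace Y]
    (A : Y →L[ℝ] C(X, ℝ)) (w : ℝ) (hw : 0 < w)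
    (A' : (C(X, ℝ) →L[ℝ] ℝ) → Y)
    (hA' : ∀ t, A' t = (InnerProductSpace.toDual ℝ Y).symm (t.comp A))
    (hinf : ∀ t : C(X, ℝ) →L[ℝ] ℝ,
      (∀ f : C(X, ℝ), (∀ x, 0 ≤ f x) → 0 ≤ t f) → ‖t‖ = 1 → w ≤ ‖A' t‖)
    (tInf : C(X, ℝ) →L[ℝ] ℝ)
    (htInfpos : ∀ f : C(X, ℝ), (∀ x, 0 ≤ f x) → 0 ≤ tInf f)
    (htInfnorm : ‖tInf‖ = 1) (hatt : ‖A' tInf‖ = w) :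
    (∀ t : C(X, ℝ) →L[ℝ] ℝ, (∀ f : C(X, ℝ), (∀ x, 0 ≤ f x) → 0 ≤ t f) → ‖t‖ = 1 →
      w ≤ inner ℝ (A' t) (‖A' tInf‖⁻¹ • A' tInf)) ∧
    (∀ x : X, w ≤ A (‖A' tInf‖⁻¹ • A' tInf) x) :=
  stmt_6_general A w A' hA' hinf tInf htInfpos htInfnorm hatt
end

section
/- Let μ be a finite positive atomless measure on ℝ². For θ ∈ [0, π), let μ(θ) be the pushforward of μ under the projection p ↦ p · (cos θ, sin θ) onto ℝ. Then μ(θ) has a nonzero pure point part for at most countably many θ. -/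
open MeasureTheory Real

/-! The fibres of the projection in direction `θ` are the lines orthogonal to `(cos θ, sin θ)`.
For each angle `θ` whose projection has an atom `x θ`, the line `L θ` over `x θ` carries positive
`μ`-mass. Lines in distinct directions of `[0, π)` meet in at most one point, which is `μ`-null,
so the lines `L θ` are almost disjoint; a finite measure has only countably many almost disjoint
sets of positive mass. -/

theorem countable_setOf_exists_map_singleton_ne_zero {ι α β : Type*} [MeasurableSpace α]
    [MeasurableSpace β] [MeasurableSingletonClass β] {μ : Measure α} [SFinite μ]
    {f : ι → α → β} (hf : ∀ i, Measurable (f i)) {S : Set ι}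
    (hS : S.Pairwise fun i j => ∀ x y, μ (f i ⁻¹' {x} ∩ f j ⁻¹' {y}) = 0) :
    {i ∈ S | ∃ x, μ.map (f i) {x} ≠ 0}.Countable := by
  set T := {i ∈ S | ∃ x, μ.map (f i) {x} ≠ 0}
  choose x hx using fun i : T => i.2.2
  have hpos : ∀ i : T, 0 < μ (f i ⁻¹' {x i}) := fun i => by
    rw [← Measure.map_apply (hf i) (measurableSet_singleton _)]
    exact pos_iff_ne_zero.2 (hx i)
  have hcount := Measure.countable_meas_pos_of_disjoint_iUnion₀ (As := fun i : T => f i ⁻¹' {x i})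
    (fun i => (hf i (measurableSet_singleton _)).nullMeasurableSet)
    (fun i j hij => hS i.2.1 j.2.1 (Subtype.val_injective.ne hij) _ _)
  simp only [hpos, Set.ofPred_true] at hcount
  exact Set.countable_coe_iff.1 (Set.countable_univ_iff.1 hcount)

/-- `sin (θ - θ')` is the determinant of the two projections. -/
theorem eq_of_projections_eq {θ θ' : ℝ} (hθ : sin (θ - θ') ≠ 0) {p q : ℝ × ℝ}
    (h : p.1 * cos θ + p.2 * sin θ = q.1 * cos θ + q.2 * sin θ)
    (h' : p.1 * cos θ' + p.2 * sin θ' = q.1 * cos θ' + q.2 * sin θ') : p = q := by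
  rw [sin_sub] at hθ
  ext
  · refine sub_eq_zero.1 ((mul_eq_zero.1 ?_).resolve_right hθ)
    linear_combination sin θ * h' - sin θ' * h
  · refine sub_eq_zero.1 ((mul_eq_zero.1 ?_).resolve_right hθ)
    linear_combination cos θ' * h - cos θ * h'

/-- If `μ` is a finite positive atomless measure on `ℝ²`, then for at most countably
many angles `θ ∈ [0, π)` does the pushforward of `μ` under the orthogonal projection
`p ↦ p · (cos θ, sin θ)` have a nonzero pure point part (i.e. an atom). -/
theorem stmt_8 (μ : Measure (ℝ × ℝ)) [IsFiniteMeasure μ] [NullSingletonClass μ] :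
    Set.Countable {θ ∈ Set.Ico (0:ℝ) π |
      ∃ x : ℝ, (Measure.map (fun p : ℝ × ℝ => p.1 * Real.cos θ + p.2 * Real.sin θ) μ)
        {x} ≠ 0} := by
  refine countable_setOf_exists_map_singleton_ne_zero (fun θ => by fun_prop) ?_
  intro θ hθ θ' hθ' hne x y
  have hsin : sin (θ - θ') ≠ 0 := by
    rw [Ne, sin_eq_zero_iff_of_lt_of_lt (by linarith [hθ.1, hθ'.2]) (by linarith [hθ.2, hθ'.1])]
    exact sub_ne_zero.2 hne
  refine Set.Subsingleton.measure_zero ?_ μ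
  rintro p ⟨hp, hp'⟩ q ⟨hq, hq'⟩
  exact eq_of_projections_eq hsin (hp.trans hq.symm) (hp'.trans hq'.symm)
end
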